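/- arXiv:2009.01681 — 3 statements merged into one kernel-verified Lean document; each statement's English description precedes it below -/
import Mathlib

section
/- Let k be a field, m,n positive integers, N an invertible n×n matrix over k, and M = 0_m ⊕ N. The map φ : o(M) → gl_m(k) × o(N) sending a block matrix [[A,B],[0,D]] ∈ o(M) to the pair (A,D) is a surjective homomorphism of Lie algebras; its kernel is the abelian Lie ideal of o(M) consisting of the matrices of the form [[0,B],[0,0]] with B an arbitrary m×n matrix; and the map (A,D) ↦ [[A,0],[0,D]] is a Lie algebra homomorphism which is a section of φ. -/
/-!
Write `X = [[A, B], [C, D]]`. For `M = 0 ⊕ N` the equation `Xᵀ M + M X = 0` reads blockwise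
`Cᵀ N = 0`, `N C = 0`, `D ∈ o(N)`; when `N` is invertible this forces `C = 0`, so `o(M)` consists
of the block upper triangular matrices `[[A, B], [0, D]]` with `D ∈ o(N)`. Taking diagonal blocks
is multiplicative on block upper triangular matrices, hence a Lie morphism, and any two matrices
`[[0, B], [0, 0]]` multiply to zero, so the kernel is abelian.
-/

open Matrix LieAlgebra

attribute [local instance 100] LieRing.ofAssociativeRing

/-- The Lie algebra `o(M) = {X ∈ gl | Xᵀ * M + M * X = 0}` of matrices preserving the
bilinear form with Gram matrix `M`. -/
def lieO (k : Type) [Field k] {ι : Type} [Fintype ι] [DecidableEq ι]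
    (M : Matrix ι ι k) : LieSubalgebra k (Matrix ι ι k) where
  carrier := {X | Xᵀ * M + M * X = 0}
  zero_mem' := by simp
  add_mem' := by
    intro X Y hX hY
    simp only [Set.mem_setOf_eq] at *
    rw [Matrix.transpose_add, Matrix.add_mul, Matrix.mul_add, add_add_add_comm, hX, hY, add_zero]
  smul_mem' := by
    intro c X hX
    simp only [Set.mem_setOf_eq] at *
    rw [Matrix.transpose_smul, Matrix.smul_mul, Matrix.mul_smul, ← smul_add, hX, smul_zero]
  lie_mem' := by
    intro X Y hX hY
    simp only [Set.mem_setOf_eq] at *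
    have hX' : Xᵀ * M = -(M * X) := eq_neg_of_add_eq_zero_left hX
    have hY' : Yᵀ * M = -(M * Y) := eq_neg_of_add_eq_zero_left hY
    have h1 : Yᵀ * Xᵀ * M = M * Y * X := by
      rw [mul_assoc, hX', mul_neg, ← mul_assoc, hY', neg_mul, neg_neg]
    have h2 : Xᵀ * Yᵀ * M = M * X * Y := by
      rw [mul_assoc, hY', mul_neg, ← mul_assoc, hX', neg_mul, neg_neg]
    simp only [Ring.lie_def, Matrix.transpose_sub, Matrix.transpose_mul, Matrix.sub_mul,
      Matrix.mul_sub]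
    rw [h1, h2, ← mul_assoc M X Y, ← mul_assoc M Y X]
    abel

instance prodBracket {L M : Type} [LieRing L] [LieRing M] : Bracket (L × M) (L × M) :=
  ⟨fun x y => (⁅x.1, y.1⁆, ⁅x.2, y.2⁆)⟩

@[simp] lemma prod_bracket_fst {L M : Type} [LieRing L] [LieRing M] (x y : L × M) :
    ⁅x, y⁆.1 = ⁅x.1, y.1⁆ := rfl

@[simp] lemma prod_bracket_snd {L M : Type} [LieRing L] [LieRing M] (x y : L × M) :
    ⁅x, y⁆.2 = ⁅x.2, y.2⁆ := rfl

/-- The product of two Lie rings, with componentwise bracket. -/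
instance prodLieRing {L M : Type} [LieRing L] [LieRing M] : LieRing (L × M) where
  add_lie x y z := by ext <;> simp
  lie_add x y z := by ext <;> simp
  lie_self x := by ext <;> simp
  leibniz_lie x y z := by ext <;> simp

/-- The product of two Lie algebras. -/
instance prodLieAlgebra (k : Type) {L M : Type} [CommRing k] [LieRing L] [LieRing M]
    [LieAlgebra k L] [LieAlgebra k M] : LieAlgebra k (L × M) where
  lie_smul c x y := by ext <;> simp

theorem Matrix.lie_fromBlocks_zero₂₁ {α l o : Type*} [Ring α] [Fintype l] [Fintype o]
    [DecidableEq l] [DecidableEq o] (A A' : Matrix l l α) (B B' : Matrix l o α)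
    (D D' : Matrix o o α) :
    ⁅fromBlocks A B 0 D, fromBlocks A' B' 0 D'⁆ =
      fromBlocks ⁅A, A'⁆ (A * B' + B * D' - (A' * B + B' * D)) 0 ⁅D, D'⁆ := by
  simp only [Ring.lie_def, fromBlocks_multiply, Matrix.mul_zero, Matrix.zero_mul, add_zero,
    zero_add]
  ext (i | i) (j | j) <;> simp

theorem Matrix.toBlocks_lie_of_toBlocks₂₁_eq_zero {α l o : Type*} [Ring α] [Fintype l]
    [Fintype o] [DecidableEq l] [DecidableEq o] {X Y : Matrix (l ⊕ o) (l ⊕ o) α}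
    (hX : X.toBlocks₂₁ = 0) (hY : Y.toBlocks₂₁ = 0) :
    ⁅X, Y⁆.toBlocks₁₁ = ⁅X.toBlocks₁₁, Y.toBlocks₁₁⁆ ∧
      ⁅X, Y⁆.toBlocks₂₂ = ⁅X.toBlocks₂₂, Y.toBlocks₂₂⁆ := by
  rw [← fromBlocks_toBlocks X, ← fromBlocks_toBlocks Y, hX, hY, lie_fromBlocks_zero₂₁]
  simp

theorem Matrix.transpose_mul_fromBlocks_add_fromBlocks_mul {α l o : Type*} [Semiring α]
    [Fintype l] [Fintype o]
    (N : Matrix o o α) (X : Matrix (l ⊕ o) (l ⊕ o) α) :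
    Xᵀ * fromBlocks 0 0 0 N + fromBlocks 0 0 0 N * X =
      fromBlocks 0 (X.toBlocks₂₁ᵀ * N) (N * X.toBlocks₂₁)
        (X.toBlocks₂₂ᵀ * N + N * X.toBlocks₂₂) := by
  conv_lhs => rw [← fromBlocks_toBlocks X]
  simp [fromBlocks_transpose, fromBlocks_multiply, fromBlocks_add]

section Blocks

variable {k : Type} [Field k] {l o : Type} [Fintype l] [Fintype o] [DecidableEq l]
  [DecidableEq o] {N : Matrix o o k}

theorem mem_lieO_iff {ι : Type} [Fintype ι] [DecidableEq ι] {M X : Matrix ι ι k} :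
    X ∈ lieO k M ↔ Xᵀ * M + M * X = 0 :=
  Iff.rfl

theorem mem_lieO_fromBlocks_iff (X : Matrix (l ⊕ o) (l ⊕ o) k) :
    X ∈ lieO k (fromBlocks 0 0 0 N) ↔
      X.toBlocks₂₁ᵀ * N = 0 ∧ N * X.toBlocks₂₁ = 0 ∧ X.toBlocks₂₂ ∈ lieO k N := by
  rw [mem_lieO_iff, transpose_mul_fromBlocks_add_fromBlocks_mul, ← fromBlocks_zero,
    fromBlocks_inj, mem_lieO_iff]
  simp

theorem toBlocks₂₁_eq_zero_of_mem_lieO (hN : IsUnit N) {X : Matrix (l ⊕ o) (l ⊕ o) k}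
    (hX : X ∈ lieO k (fromBlocks 0 0 0 N)) : X.toBlocks₂₁ = 0 :=
  let := hN.invertible
  mul_right_injective_of_invertible N <|
    ((mem_lieO_fromBlocks_iff X).mp hX).2.1.trans (Matrix.mul_zero N).symm

theorem fromBlocks_mem_lieO (A : Matrix l l k) {D : Matrix o o k} (hD : D ∈ lieO k N) :
    fromBlocks A 0 0 D ∈ lieO k (fromBlocks 0 0 0 N) := by
  simp [mem_lieO_fromBlocks_iff, hD]

theorem toBlocks₂₂_mem_lieO {X : Matrix (l ⊕ o) (l ⊕ o) k}
    (hX : X ∈ lieO k (fromBlocks 0 0 0 N)) : X.toBlocks₂₂ ∈ lieO k N :=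
  ((mem_lieO_fromBlocks_iff X).mp hX).2.2

variable (l) in
noncomputable def lieOBlockProj (hN : IsUnit N) :
    lieO k (fromBlocks 0 0 0 N : Matrix (l ⊕ o) (l ⊕ o) k) →ₗ⁅k⁆ Matrix l l k × lieO k N where
  toFun X := (X.1.toBlocks₁₁, ⟨X.1.toBlocks₂₂, toBlocks₂₂_mem_lieO X.2⟩)
  map_add' _ _ := rfl
  map_smul' _ _ := rfl
  map_lie' {X Y} :=
    have h := toBlocks_lie_of_toBlocks₂₁_eq_zero (toBlocks₂₁_eq_zero_of_mem_lieO hN X.2)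
      (toBlocks₂₁_eq_zero_of_mem_lieO hN Y.2)
    Prod.ext h.1 (Subtype.ext h.2)

@[simp]
theorem lieOBlockProj_apply (hN : IsUnit N)
    (X : lieO k (fromBlocks 0 0 0 N : Matrix (l ⊕ o) (l ⊕ o) k)) :
    lieOBlockProj l hN X = (X.1.toBlocks₁₁, ⟨X.1.toBlocks₂₂, toBlocks₂₂_mem_lieO X.2⟩) :=
  rfl

noncomputable def lieOBlockDiag :
    Matrix l l k × lieO k N →ₗ⁅k⁆ lieO k (fromBlocks 0 0 0 N : Matrix (l ⊕ o) (l ⊕ o) k) where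
  toFun p := ⟨fromBlocks p.1 0 0 p.2, fromBlocks_mem_lieO p.1 p.2.2⟩
  map_add' p q := Subtype.ext <| by simp [fromBlocks_add]
  map_smul' c p := Subtype.ext <| by simp [fromBlocks_smul]
  map_lie' {p q} := Subtype.ext <| by
    simpa using (lie_fromBlocks_zero₂₁ p.1 q.1 0 0 p.2.1 q.2.1).symm

theorem lieOBlockProj_lieOBlockDiag (hN : IsUnit N) (p : Matrix l l k × lieO k N) :
    lieOBlockProj l hN (lieOBlockDiag p) = p :=
  rfl

theorem lieOBlockProj_eq_zero_iff (hN : IsUnit N)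
    (X : lieO k (fromBlocks 0 0 0 N : Matrix (l ⊕ o) (l ⊕ o) k)) :
    lieOBlockProj l hN X = 0 ↔
      ∃ B : Matrix l o k, (X : Matrix (l ⊕ o) (l ⊕ o) k) = fromBlocks 0 B 0 0 := by
  rw [lieOBlockProj_apply, Prod.ext_iff, Subtype.ext_iff]
  simp only [Prod.fst_zero, Prod.snd_zero, ZeroMemClass.coe_zero]
  constructor
  · rintro ⟨h₁₁, h₂₂⟩
    exact ⟨_, (fromBlocks_toBlocks X.1).symm.trans <| by
      rw [h₁₁, h₂₂, toBlocks₂₁_eq_zero_of_mem_lieO hN X.2]⟩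
  · rintro ⟨B, hB⟩
    simp [hB]

theorem lie_eq_zero_of_lieOBlockProj_eq_zero (hN : IsUnit N)
    {X Y : lieO k (fromBlocks 0 0 0 N : Matrix (l ⊕ o) (l ⊕ o) k)}
    (hX : lieOBlockProj l hN X = 0) (hY : lieOBlockProj l hN Y = 0) : ⁅X, Y⁆ = 0 := by
  obtain ⟨B, hB⟩ := (lieOBlockProj_eq_zero_iff hN X).mp hX
  obtain ⟨B', hB'⟩ := (lieOBlockProj_eq_zero_iff hN Y).mp hY
  apply Subtype.ext
  rw [LieSubalgebra.coe_bracket, hB, hB', lie_fromBlocks_zero₂₁]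
  simp

end Blocks

theorem lieO_blockDiag_projection_general (k : Type) [Field k] (m n : ℕ)
    (N : Matrix (Fin n) (Fin n) k) (hN : IsUnit N) :
    ∃ φ : ↥(lieO k (Matrix.fromBlocks 0 0 0 N : Matrix (Fin m ⊕ Fin n) (Fin m ⊕ Fin n) k))
        →ₗ⁅k⁆ (Matrix (Fin m) (Fin m) k × ↥(lieO k N)),
      (∀ X, (φ X).1 = (X : Matrix (Fin m ⊕ Fin n) (Fin m ⊕ Fin n) k).toBlocks₁₁ ∧
          ((φ X).2 : Matrix (Fin n) (Fin n) k) =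
            (X : Matrix (Fin m ⊕ Fin n) (Fin m ⊕ Fin n) k).toBlocks₂₂) ∧
      Function.Surjective φ ∧
      (∀ X, φ X = 0 ↔ ∃ B : Matrix (Fin m) (Fin n) k,
          (X : Matrix (Fin m ⊕ Fin n) (Fin m ⊕ Fin n) k) = Matrix.fromBlocks 0 B 0 0) ∧
      (∀ X Y, φ X = 0 → φ Y = 0 → ⁅X, Y⁆ = 0) ∧
      ∃ s : (Matrix (Fin m) (Fin m) k × ↥(lieO k N)) →ₗ⁅k⁆
          ↥(lieO k (Matrix.fromBlocks 0 0 0 N : Matrix (Fin m ⊕ Fin n) (Fin m ⊕ Fin n) k)),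
        (∀ p, (s p : Matrix (Fin m ⊕ Fin n) (Fin m ⊕ Fin n) k) =
            Matrix.fromBlocks p.1 0 0 (p.2 : Matrix (Fin n) (Fin n) k)) ∧
        ∀ p, φ (s p) = p := by
  refine ⟨lieOBlockProj (Fin m) hN, fun X => ⟨rfl, rfl⟩,
    Function.LeftInverse.surjective (lieOBlockProj_lieOBlockDiag hN),
    lieOBlockProj_eq_zero_iff hN, fun X Y => lie_eq_zero_of_lieOBlockProj_eq_zero hN,
    lieOBlockDiag, fun p => rfl, lieOBlockProj_lieOBlockDiag hN⟩

/-- For `M = 0ₘ ⊕ N` with `N` invertible, the map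
`φ : o(M) → gl_m(k) × o(N)`, `[[A,B],[0,D]] ↦ (A, D)`, is a surjective Lie algebra
homomorphism; its kernel is the abelian Lie ideal of matrices `[[0,B],[0,0]]`; and
`(A, D) ↦ [[A,0],[0,D]]` is a Lie algebra homomorphism which is a section of `φ`. -/
theorem lieO_blockDiag_projection (k : Type) [Field k] (m n : ℕ) (hm : 0 < m) (hn : 0 < n)
    (N : Matrix (Fin n) (Fin n) k) (hN : IsUnit N) :
    ∃ φ : ↥(lieO k (Matrix.fromBlocks 0 0 0 N : Matrix (Fin m ⊕ Fin n) (Fin m ⊕ Fin n) k))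
        →ₗ⁅k⁆ (Matrix (Fin m) (Fin m) k × ↥(lieO k N)),
      (∀ X, (φ X).1 = (X : Matrix (Fin m ⊕ Fin n) (Fin m ⊕ Fin n) k).toBlocks₁₁ ∧
          ((φ X).2 : Matrix (Fin n) (Fin n) k) =
            (X : Matrix (Fin m ⊕ Fin n) (Fin m ⊕ Fin n) k).toBlocks₂₂) ∧
      Function.Surjective φ ∧
      (∀ X, φ X = 0 ↔ ∃ B : Matrix (Fin m) (Fin n) k,
          (X : Matrix (Fin m ⊕ Fin n) (Fin m ⊕ Fin n) k) = Matrix.fromBlocks 0 B 0 0) ∧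
      (∀ X Y, φ X = 0 → φ Y = 0 → ⁅X, Y⁆ = 0) ∧
      ∃ s : (Matrix (Fin m) (Fin m) k × ↥(lieO k N)) →ₗ⁅k⁆
          ↥(lieO k (Matrix.fromBlocks 0 0 0 N : Matrix (Fin m ⊕ Fin n) (Fin m ⊕ Fin n) k)),
        (∀ p, (s p : Matrix (Fin m ⊕ Fin n) (Fin m ⊕ Fin n) k) =
            Matrix.fromBlocks p.1 0 0 (p.2 : Matrix (Fin n) (Fin n) k)) ∧
        ∀ p, φ (s p) = p :=
  lieO_blockDiag_projection_general k m n N hN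
end

section
/- Let k be a field with char k = 2, let m ≥ 0 and n ≥ 1 be integers, and set M = 0_m ⊕ Π_{2n}, a square matrix of size d = m+2n. Let X₀ be the block-diagonal d×d matrix with blocks 0_{m+n} and I_n. Then X₀ᵀ·M + M·X₀ = M, so X₀ ∈ ō(M) but X₀ ∉ o(M), and ō(M) is the internal direct sum of o(M) and the one-dimensional subspace k·X₀; in particular o(M) has codimension one in ō(M). -/
open Matrix LieAlgebra

attribute [local instance 100] LieRing.ofAssociativeRing

/-- `ō(M)`: the space of matrices `X` with `Xᵀ * M + M * X` in the linear span of `M`. -/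
def lieOBar (k : Type) [Field k] {ι : Type} [Fintype ι] [DecidableEq ι]
    (M : Matrix ι ι k) : Submodule k (Matrix ι ι k) where
  carrier := {X | ∃ c : k, Xᵀ * M + M * X = c • M}
  zero_mem' := ⟨0, by simp⟩
  add_mem' := by
    rintro X Y ⟨a, ha⟩ ⟨b, hb⟩
    exact ⟨a + b, by
      rw [Matrix.transpose_add, Matrix.add_mul, Matrix.mul_add, add_add_add_comm, ha, hb,
        add_smul]⟩
  smul_mem' := by
    rintro c X ⟨a, ha⟩
    exact ⟨c * a, by
      rw [Matrix.transpose_smul, Matrix.smul_mul, Matrix.mul_smul, ← smul_add, ha, smul_smul]⟩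

/-!
If `X₀ᵀ M + M X₀ = M` and `M ≠ 0`, then `X ↦ Xᵀ M + M X` maps `ō(M)` onto the line `k M`
with kernel `o(M)`, and `X₀` spans a complement: `X = (X - c X₀) + c X₀`, where `c` is the
unique scalar with `Xᵀ M + M X = c M`.
-/

namespace Matrix

variable {R : Type*} [CommRing R] {ι : Type*} [Fintype ι]

def formDefect (M : Matrix ι ι R) : Matrix ι ι R →ₗ[R] Matrix ι ι R where
  toFun X := Xᵀ * M + M * X
  map_add' X Y := by
    rw [transpose_add, Matrix.add_mul, Matrix.mul_add, add_add_add_comm]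
  map_smul' c X := by
    rw [transpose_smul, Matrix.smul_mul, Matrix.mul_smul, ← smul_add, RingHom.id_apply]

@[simp]
theorem formDefect_apply (M X : Matrix ι ι R) : formDefect M X = Xᵀ * M + M * X := rfl

variable {m n : Type*} [DecidableEq n]

theorem fromBlocks_zero_symplectic_ne_zero [Nontrivial R] [Nonempty n] :
    (fromBlocks 0 0 0 (fromBlocks 0 1 (-1) 0) : Matrix (m ⊕ (n ⊕ n)) (m ⊕ (n ⊕ n)) R) ≠ 0 := by
  obtain ⟨i⟩ := ‹Nonempty n›
  intro h
  simpa using congrFun (congrFun h (Sum.inr (Sum.inl i))) (Sum.inr (Sum.inr i))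

variable [Fintype m] [Fintype n]

theorem formDefect_fromBlocks_zero_one :
    formDefect (fromBlocks 0 0 0 (fromBlocks 0 1 (-1) 0) : Matrix (m ⊕ (n ⊕ n)) (m ⊕ (n ⊕ n)) R)
      (fromBlocks 0 0 0 (fromBlocks 0 0 0 1)) = fromBlocks 0 0 0 (fromBlocks 0 1 (-1) 0) := by
  simp [fromBlocks_transpose, fromBlocks_multiply, fromBlocks_add]

end Matrix

section DirectSum

variable {k : Type} [Field k] {ι : Type} [Fintype ι] [DecidableEq ι]
  {M X X₀ : Matrix ι ι k}

theorem mem_lieO_iff_formDefect_eq_zero : X ∈ lieO k M ↔ formDefect M X = 0 := Iff.rfl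

theorem mem_lieOBar_iff_formDefect : X ∈ lieOBar k M ↔ ∃ c : k, formDefect M X = c • M :=
  Iff.rfl

variable (hX₀ : formDefect M X₀ = M)
include hX₀

theorem formDefect_add_smul_of_mem_lieO {Y : Matrix ι ι k} (hY : Y ∈ lieO k M) (c : k) :
    formDefect M (Y + c • X₀) = c • M := by
  rw [map_add, map_smul, mem_lieO_iff_formDefect_eq_zero.mp hY, hX₀, zero_add]

theorem mem_lieOBar_of_formDefect_eq_self : X₀ ∈ lieOBar k M :=
  ⟨1, by rw [← formDefect_apply, hX₀, one_smul]⟩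

theorem notMem_lieO_of_formDefect_eq_self (hM : M ≠ 0) : X₀ ∉ lieO k M := by
  rwa [mem_lieO_iff_formDefect_eq_zero, hX₀]

theorem add_smul_mem_lieOBar {Y : Matrix ι ι k} (hY : Y ∈ lieO k M) (c : k) :
    Y + c • X₀ ∈ lieOBar k M :=
  ⟨c, formDefect_add_smul_of_mem_lieO hX₀ hY c⟩

theorem existsUnique_lieO_add_smul (hM : M ≠ 0) (hX : X ∈ lieOBar k M) :
    ∃! p : Matrix ι ι k × k, p.1 ∈ lieO k M ∧ X = p.1 + p.2 • X₀ := by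
  obtain ⟨c, hc⟩ := mem_lieOBar_iff_formDefect.mp hX
  refine ⟨(X - c • X₀, c), ⟨?_, by module⟩, ?_⟩
  · rw [mem_lieO_iff_formDefect_eq_zero, map_sub, map_smul, hc, hX₀, sub_self]
  · rintro ⟨Y, a⟩ ⟨hY, rfl⟩
    have hac : a = c :=
      smul_left_injective k hM ((formDefect_add_smul_of_mem_lieO hX₀ hY a).symm.trans hc)
    subst hac
    simp

end DirectSum

theorem lieOBar_symplectic_of_charTwo_general (k : Type) [Field k] (m n : ℕ) (hn : 0 < n) :
    ∀ M : Matrix (Fin m ⊕ (Fin n ⊕ Fin n)) (Fin m ⊕ (Fin n ⊕ Fin n)) k,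
      M = Matrix.fromBlocks 0 0 0 (Matrix.fromBlocks 0 1 (-1) 0) →
    ∀ X₀ : Matrix (Fin m ⊕ (Fin n ⊕ Fin n)) (Fin m ⊕ (Fin n ⊕ Fin n)) k,
      X₀ = Matrix.fromBlocks 0 0 0 (Matrix.fromBlocks 0 0 0 1) →
      X₀ᵀ * M + M * X₀ = M ∧
      X₀ ∈ lieOBar k M ∧
      X₀ ∉ lieO k M ∧
      (∀ Y ∈ lieO k M, ∀ c : k, Y + c • X₀ ∈ lieOBar k M) ∧
      (∀ X ∈ lieOBar k M, ∃! p : Matrix (Fin m ⊕ (Fin n ⊕ Fin n)) (Fin m ⊕ (Fin n ⊕ Fin n)) k × k,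
          p.1 ∈ lieO k M ∧ X = p.1 + p.2 • X₀) := by
  rintro M rfl X₀ rfl
  have hX₀ := formDefect_fromBlocks_zero_one (R := k) (m := Fin m) (n := Fin n)
  have : Nonempty (Fin n) := ⟨⟨0, hn⟩⟩
  have hM := fromBlocks_zero_symplectic_ne_zero (R := k) (m := Fin m) (n := Fin n)
  exact ⟨hX₀, mem_lieOBar_of_formDefect_eq_self hX₀, notMem_lieO_of_formDefect_eq_self hX₀ hM,
    fun _ hY c ↦ add_smul_mem_lieOBar hX₀ hY c,
    fun _ hX ↦ existsUnique_lieO_add_smul hX₀ hM hX⟩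

/-- Let `char k = 2`, `m ≥ 0`, `n ≥ 1` and `M = 0ₘ ⊕ Π₂ₙ` with
`Π₂ₙ = [[0, 1], [-1, 0]]`.  Let `X₀` be the block-diagonal matrix with blocks `0_{m+n}`
and `1ₙ`.  Then `X₀ᵀ M + M X₀ = M`, so `X₀ ∈ ō(M)` and `X₀ ∉ o(M)`; moreover `ō(M)` is
the internal direct sum of `o(M)` and the line `k • X₀`; in particular `o(M)` has
codimension one in `ō(M)`. -/
theorem lieOBar_symplectic_of_charTwo (k : Type) [Field k] [CharP k 2] (m n : ℕ) (hn : 0 < n) :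
    ∀ M : Matrix (Fin m ⊕ (Fin n ⊕ Fin n)) (Fin m ⊕ (Fin n ⊕ Fin n)) k,
      M = Matrix.fromBlocks 0 0 0 (Matrix.fromBlocks 0 1 (-1) 0) →
    ∀ X₀ : Matrix (Fin m ⊕ (Fin n ⊕ Fin n)) (Fin m ⊕ (Fin n ⊕ Fin n)) k,
      X₀ = Matrix.fromBlocks 0 0 0 (Matrix.fromBlocks 0 0 0 1) →
      X₀ᵀ * M + M * X₀ = M ∧
      X₀ ∈ lieOBar k M ∧
      X₀ ∉ lieO k M ∧
      (∀ Y ∈ lieO k M, ∀ c : k, Y + c • X₀ ∈ lieOBar k M) ∧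
      (∀ X ∈ lieOBar k M, ∃! p : Matrix (Fin m ⊕ (Fin n ⊕ Fin n)) (Fin m ⊕ (Fin n ⊕ Fin n)) k × k,
          p.1 ∈ lieO k M ∧ X = p.1 + p.2 • X₀) :=
  lieOBar_symplectic_of_charTwo_general k m n hn
end

section
/- Let k be a field with char k = 2 and n ≥ 3 an integer. Then: (a) for every invertible diagonal n×n matrix D over k, the radical of o(D) equals the centre of o(D), and both equal the one-dimensional subspace k·I_n spanned by the identity matrix; (b) the radical of the symplectic Lie algebra sp_{2n} equals the centre of sp_{2n}, and both equal k·I_{2n}. -/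
open Matrix LieAlgebra

attribute [local instance 100] LieRing.ofAssociativeRing

/-! Write `p̄` for `p.swap`. In characteristic 2, any ideal containing a root vector
`D q • E p q + D p • E q p` of `o(D)` (`p ≠ q`), or `E p q + E q̄ p̄` of `sp₂ₙ` (`q ∉ {p, p̄}`),
contains two other root vectors whose bracket is a nonzero multiple of it; finding them needs
a third index, whence `n ≥ 3`. So a root vector lies in every term of the derived series of
any ideal containing it, hence in no solvable ideal. For `X` in the radical, a double bracket
with matrix units of the algebra (the `E p p` for `o(D)`, the `E p p̄` for `sp₂ₙ`) turns an
entry `X p q` into the coefficient of a root vector, so these entries vanish. The bracket of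
`X` with the root vector at `(p, q)` is again in the radical, and its `(p, q)` entry is
proportional to `X q q - X p p` (for `sp₂ₙ` its `(p, q̄)` entry is `X q q̄`); so `X` is scalar,
and scalar matrices are central. -/

theorem LieIdeal.eq_zero_of_forall_mem_lie_self {R L : Type*} [CommRing R] [LieRing L]
    [LieAlgebra R L] {J : LieIdeal R L} [IsSolvable J] {x : L} (hxJ : x ∈ J)
    (hx : ∀ I : LieIdeal R L, x ∈ I → x ∈ ⁅I, I⁆) : x = 0 := by
  have hmem (m : ℕ) : x ∈ derivedSeriesOfIdeal R L m J := by
    induction m with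
    | zero => exact hxJ
    | succ m ih => rw [derivedSeriesOfIdeal_succ]; exact hx _ ih
  obtain ⟨m, hm⟩ := IsSolvable.solvable (R := R) (L := J)
  rw [LieIdeal.derivedSeries_eq_bot_iff] at hm
  simpa [hm] using hmem m

theorem LieSubmodule.mem_of_smul_mem {K L M : Type*} [Field K] [LieRing L] [LieAlgebra K L]
    [AddCommGroup M] [Module K M] [LieRingModule L M] {N : LieSubmodule K L M} {c : K} {x : M}
    (hc : c ≠ 0) (h : c • x ∈ N) : x ∈ N :=
  (Submodule.smul_mem_iff N.toSubmodule hc).1 h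

section Scalars

variable {k A : Type*} [CommRing k] [Ring A] [Algebra k A]

theorem LieSubalgebra.mem_center_of_coe_eq_smul_one {K : LieSubalgebra k A} {x : K} {c : k}
    (hx : (x : A) = c • 1) : x ∈ center k K := by
  rw [LieAlgebra.center, LieModule.mem_maxTrivSubmodule]
  intro y
  ext
  simp [Ring.lie_def, hx]

theorem LieSubalgebra.radical_eq_center_of_le_scalars (K : LieSubalgebra k A)
    (h : ∀ x ∈ radical k K, ∃ c : k, (x : A) = c • 1) :
    radical k K = center k K ∧ ∀ x : K, x ∈ radical k K ↔ ∃ c : k, (x : A) = c • 1 := by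
  have hcenter (x : K) : (∃ c : k, (x : A) = c • 1) → x ∈ center k K :=
    fun ⟨_, hx⟩ => mem_center_of_coe_eq_smul_one hx
  refine ⟨le_antisymm (fun x hx => hcenter x (h x hx)) (center_le_radical k K), fun x => ?_⟩
  exact ⟨h x, fun hx => center_le_radical k K (hcenter x hx)⟩

end Scalars

theorem Fintype.exists_ne_ne {ι : Type*} [Fintype ι] [DecidableEq ι] (h : 3 ≤ Fintype.card ι)
    (p q : ι) : ∃ r, r ≠ p ∧ r ≠ q := by
  obtain ⟨r, -, hr⟩ := Finset.exists_mem_notMem_of_card_lt_card (t := Finset.univ)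
    (Finset.card_le_two.trans_lt h : ({p, q} : Finset ι).card < _)
  exact ⟨r, by simpa using hr⟩

theorem Sum.swap_eq_iff_eq_swap {α : Type*} {a b : α ⊕ α} : a.swap = b ↔ a = b.swap :=
  Function.Involutive.eq_iff swap_swap

theorem exists_ne_swap_ne_swap {ι : Type*} [Fintype ι] [DecidableEq ι]
    (hn : 3 ≤ Fintype.card ι) (p q : ι ⊕ ι) :
    ∃ r, r ≠ p ∧ r ≠ p.swap ∧ r ≠ q ∧ r ≠ q.swap := by
  have hcard : ({p, p.swap, q, q.swap} : Finset (ι ⊕ ι)).card < Fintype.card (ι ⊕ ι) := by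
    rw [Fintype.card_sum]
    exact Finset.card_le_four.trans_lt (by omega)
  obtain ⟨r, -, hr⟩ := Finset.exists_mem_notMem_of_card_lt_card (t := Finset.univ) hcard
  exact ⟨r, by simpa using hr⟩

section MatrixUnits

variable {ι k : Type*} [DecidableEq ι] [CommRing k]

theorem Matrix.lie_single_apply [Fintype ι] (i j : ι) (c : k) (X : Matrix ι ι k) (p q : ι) :
    ⁅single i j c, X⁆ p q =
      (if p = i then c * X j q else 0) - (if q = j then X p i * c else 0) := by
  rw [Ring.lie_def, sub_apply]
  congr 1 <;> split_ifs with h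
  · subst h; exact single_mul_apply_same ..
  · exact single_mul_apply_of_ne _ _ _ _ _ h _
  · subst h; exact mul_single_apply_same ..
  · exact mul_single_apply_of_ne _ _ _ _ _ h _

theorem Matrix.lie_single_lie_single [Fintype ι] {a b : ι} (hab : a ≠ b) (Y : Matrix ι ι k) :
    ⁅single b b (1 : k), ⁅single a a (1 : k), Y⁆⁆ = -(single a b (Y a b) + single b a (Y b a)) := by
  ext p q
  simp only [lie_single_apply, neg_apply, Matrix.add_apply, single_apply]
  split_ifs <;> grind

theorem Matrix.lie_single_swap_lie_single_swap {κ : Type*} [Fintype κ] [DecidableEq κ]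
    {a b : κ ⊕ κ} (hab : a ≠ b) (Y : Matrix (κ ⊕ κ) (κ ⊕ κ) k) :
    ⁅single a.swap a (1 : k), ⁅single b b.swap (1 : k), Y⁆⁆ =
      -(single a.swap b.swap (Y a b) + single b a (Y b.swap a.swap)) := by
  ext p q
  simp only [lie_single_apply, neg_apply, Matrix.add_apply, single_apply]
  split_ifs <;> grind

theorem Matrix.neg_eq_self_of_charTwo [CharP k 2] {m n : Type*} (A : Matrix m n k) : -A = A := by
  ext
  exact CharTwo.neg_eq _

theorem Matrix.IsDiag.eq_smul_one {X : Matrix ι ι k} (hX : X.IsDiag)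
    (hdiag : ∀ p q, X p p = X q q) (i : ι) : X = X i i • 1 := by
  ext p q
  rcases eq_or_ne p q with rfl | hpq
  · simp [hdiag p i]
  · simp [hX hpq, hpq]

end MatrixUnits

section Diagonal

variable {k ι : Type} [Field k] [CharP k 2] [Fintype ι] [DecidableEq ι] {D : ι → k}

theorem mem_lieO_diagonal_iff {X : Matrix ι ι k} :
    X ∈ lieO k (diagonal D) ↔ ∀ p q, D p * X p q = D q * X q p := by
  change Xᵀ * diagonal D + diagonal D * X = 0 ↔ _
  rw [← Matrix.ext_iff]
  simp only [Matrix.add_apply, mul_diagonal, diagonal_mul, transpose_apply,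
    Matrix.zero_apply, add_eq_zero_iff_eq_neg, CharTwo.neg_eq]
  exact forall_congr' fun p => forall_congr' fun q => by rw [mul_comm, eq_comm]

variable (D) in
def rootO (p q : ι) : lieO k (diagonal D) :=
  ⟨single p q (D q) + single q p (D p), mem_lieO_diagonal_iff.2 fun a b => by
    simp only [Matrix.add_apply, single_apply]
    split_ifs <;> grind⟩

variable (D) in
def diagUnitO (a : ι) : lieO k (diagonal D) :=
  ⟨single a a 1, mem_lieO_diagonal_iff.2 fun p q => by
    simp only [single_apply]
    split_ifs <;> grind⟩

theorem lie_rootO {p q r : ι} (hpq : p ≠ q) (hpr : p ≠ r) (hqr : q ≠ r) :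
    ⁅rootO D p r, rootO D r q⁆ = D r • rootO D p q := by
  ext1
  simp [rootO, Ring.lie_def, add_mul, mul_add, hpq, hpr, hqr, hpq.symm, hpr.symm, hqr.symm,
    smul_add, mul_comm, sub_eq_add_neg, neg_eq_self_of_charTwo]

theorem lie_rootO_apply {p q : ι} (hpq : p ≠ q) (Y : Matrix ι ι k) :
    ⁅(rootO D p q : Matrix ι ι k), Y⁆ p q = D q * (Y q q - Y p p) := by
  simp [rootO, add_lie, lie_single_apply, hpq, hpq.symm, mul_sub, mul_comm]

theorem rootO_notMem_radical (hD : ∀ i, D i ≠ 0) (hn : 3 ≤ Fintype.card ι) {p q : ι}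
    (hpq : p ≠ q) : rootO D p q ∉ radical k (lieO k (diagonal D)) := by
  intro h
  have hne : rootO D p q ≠ 0 := fun h0 => hD q <| by
    simpa [rootO, hpq] using congr_arg (fun X : lieO k (diagonal D) => (X : Matrix ι ι k) p q) h0
  refine hne (LieIdeal.eq_zero_of_forall_mem_lie_self h fun I hI => ?_)
  obtain ⟨r, hrp, hrq⟩ := Fintype.exists_ne_ne hn p q
  have hprI : rootO D p r ∈ I := LieSubmodule.mem_of_smul_mem (hD q) <| by
    rw [← lie_rootO hrp.symm hpq hrq]
    exact lie_mem_left k _ I _ _ hI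
  have hrqI : rootO D r q ∈ I := LieSubmodule.mem_of_smul_mem (hD p) <| by
    rw [← lie_rootO hrq hrp hpq.symm]
    exact lie_mem_right k _ I _ _ hI
  refine LieSubmodule.mem_of_smul_mem (hD r) ?_
  rw [← lie_rootO hpq hrp.symm hrq.symm]
  exact LieSubmodule.lie_mem_lie hprI hrqI

theorem apply_eq_zero_of_mem_radical_lieO_diagonal (hD : ∀ i, D i ≠ 0) (hn : 3 ≤ Fintype.card ι)
    {X : lieO k (diagonal D)} (hX : X ∈ radical k (lieO k (diagonal D))) {p q : ι} (hpq : p ≠ q) :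
    (X : Matrix ι ι k) p q = 0 := by
  by_contra hx
  refine rootO_notMem_radical hD hn hpq (LieSubmodule.mem_of_smul_mem hx ?_)
  have hsym := mem_lieO_diagonal_iff.1 X.2 p q
  have key : (X : Matrix ι ι k) p q • rootO D p q =
      D q • ⁅diagUnitO D q, ⁅diagUnitO D p, X⁆⁆ := by
    ext1
    simp only [rootO, diagUnitO, SetLike.val_smul, LieSubalgebra.coe_bracket,
      lie_single_lie_single hpq, neg_eq_self_of_charTwo, smul_add, smul_single, smul_eq_mul, ← hsym]
    ring_nf
  rw [key]
  exact Submodule.smul_mem _ _ (lie_mem_right k _ _ _ _ (lie_mem_right k _ _ _ _ hX))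

theorem exists_eq_smul_one_of_mem_radical_lieO_diagonal (hD : ∀ i, D i ≠ 0)
    (hn : 3 ≤ Fintype.card ι) {X : lieO k (diagonal D)} (hX : X ∈ radical k (lieO k (diagonal D))) :
    ∃ c : k, (X : Matrix ι ι k) = c • 1 := by
  have hoff {Y : lieO k (diagonal D)} (hY : Y ∈ radical k (lieO k (diagonal D))) :
      (Y : Matrix ι ι k).IsDiag := fun _ _ => apply_eq_zero_of_mem_radical_lieO_diagonal hD hn hY
  have hdiag (p q : ι) : (X : Matrix ι ι k) p p = (X : Matrix ι ι k) q q := by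
    rcases eq_or_ne p q with rfl | hpq
    · rfl
    have h := hoff (lie_mem_right k _ _ (rootO D p q) X hX) hpq
    rw [LieSubalgebra.coe_bracket, lie_rootO_apply hpq, mul_eq_zero, sub_eq_zero] at h
    exact (h.resolve_left (hD q)).symm
  obtain ⟨i⟩ : Nonempty ι := Fintype.card_pos_iff.1 (by omega)
  exact ⟨_, (hoff hX).eq_smul_one hdiag i⟩

end Diagonal

section Symplectic

variable {k ι : Type} [Field k] [CharP k 2] [Fintype ι] [DecidableEq ι]

local notation "Π₂ₙ" => (fromBlocks 0 1 (-1) 0 : Matrix (ι ⊕ ι) (ι ⊕ ι) k)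

omit [Fintype ι] in
theorem fromBlocks_zero_one_neg_one_zero_apply_of_charTwo (p q : ι ⊕ ι) :
    Π₂ₙ p q = if p.swap = q then 1 else 0 := by
  cases p <;> cases q <;> simp [one_apply, CharTwo.neg_eq, eq_comm]

theorem mem_lieO_sp_iff {X : Matrix (ι ⊕ ι) (ι ⊕ ι) k} :
    X ∈ lieO k Π₂ₙ ↔ ∀ p q, X p.swap q = X q.swap p := by
  change Xᵀ * Π₂ₙ + Π₂ₙ * X = 0 ↔ _
  rw [← Matrix.ext_iff]
  refine forall_congr' fun p => forall_congr' fun q => ?_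
  have hleft : (Π₂ₙ * X) p q = X p.swap q := by
    simp [Matrix.mul_apply, fromBlocks_zero_one_neg_one_zero_apply_of_charTwo,
      -Fintype.sum_sum_type]
  have hright : (Xᵀ * Π₂ₙ) p q = X q.swap p := by
    simp [Matrix.mul_apply, fromBlocks_zero_one_neg_one_zero_apply_of_charTwo,
      Sum.swap_eq_iff_eq_swap, -Fintype.sum_sum_type]
  rw [Matrix.add_apply, hleft, hright, Matrix.zero_apply, CharTwo.add_eq_zero, eq_comm]

variable (k) in
def rootSp (p q : ι ⊕ ι) : lieO k Π₂ₙ :=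
  ⟨single p q 1 + single q.swap p.swap 1, mem_lieO_sp_iff.2 fun a b => by
    simp only [Matrix.add_apply, single_apply]
    split_ifs <;> grind [Sum.swap_swap]⟩

variable (k) in
def longRootSp (p : ι ⊕ ι) : lieO k Π₂ₙ :=
  ⟨single p p.swap 1, mem_lieO_sp_iff.2 fun a b => by
    simp only [single_apply]
    split_ifs <;> grind [Sum.swap_swap]⟩

variable (k) in
theorem lie_rootSp {p q r : ι ⊕ ι} (hq : q ≠ p.swap) (hr : r ≠ q.swap) (hrp : r ≠ p) :
    ⁅rootSp k p q, rootSp k q r⁆ = rootSp k p r := by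
  have h1 : q ≠ r.swap := fun h => hr (by rw [h, Sum.swap_swap])
  have h2 : p.swap ≠ q := Ne.symm hq
  have h3 : p.swap ≠ r.swap := fun h => hrp (Sum.swap_leftInverse.injective h).symm
  have h4 : q.swap ≠ p := fun h => hq (by rw [← h, Sum.swap_swap])
  ext1
  simp [rootSp, Ring.lie_def, add_mul, mul_add, h1, h2, h3, h4, hrp, hr,
    sub_eq_add_neg, neg_eq_self_of_charTwo]

theorem lie_rootSp_apply {r a : ι ⊕ ι} (hra : r ≠ a.swap) (Y : Matrix (ι ⊕ ι) (ι ⊕ ι) k) :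
    ⁅(rootSp k r a : Matrix (ι ⊕ ι) (ι ⊕ ι) k), Y⁆ r a = Y a a - Y r r := by
  have : a ≠ r.swap := fun h => hra (by rw [h, Sum.swap_swap])
  simp [rootSp, add_lie, lie_single_apply, hra, this]

theorem lie_rootSp_apply_swap {r a : ι ⊕ ι} (hra : r ≠ a) (hra' : r ≠ a.swap)
    (Y : Matrix (ι ⊕ ι) (ι ⊕ ι) k) :
    ⁅(rootSp k r a : Matrix (ι ⊕ ι) (ι ⊕ ι) k), Y⁆ r a.swap = Y a a.swap := by
  have h1 : a.swap ≠ r.swap := fun h => hra (Sum.swap_leftInverse.injective h).symm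
  have h2 : a.swap ≠ a := by cases a <;> simp
  simp [rootSp, add_lie, lie_single_apply, hra', h1, h2]

theorem rootSp_notMem_radical (hn : 3 ≤ Fintype.card ι) {p q : ι ⊕ ι} (hqp : q ≠ p)
    (hq : q ≠ p.swap) : rootSp k p q ∉ radical k (lieO k Π₂ₙ) := by
  intro h
  have hne : rootSp k p q ≠ 0 := fun h0 => by
    simpa [rootSp, single_apply, hq.symm] using
      congr_arg (fun X : lieO k Π₂ₙ => (X : Matrix (ι ⊕ ι) (ι ⊕ ι) k) p q) h0
  refine hne (LieIdeal.eq_zero_of_forall_mem_lie_self h fun I hI => ?_)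
  obtain ⟨r, hrp, hrp', hrq, hrq'⟩ := exists_ne_swap_ne_swap hn p q
  have hpr : p ≠ r.swap := fun h => hrp' (by rw [h, Sum.swap_swap])
  have hqr : q ≠ r.swap := fun h => hrq' (by rw [h, Sum.swap_swap])
  have hprI : rootSp k p r ∈ I := lie_rootSp k hq hrq' hrp ▸ lie_mem_left k _ I _ _ hI
  have hrqI : rootSp k r q ∈ I := lie_rootSp k hpr hq hrq.symm ▸ lie_mem_right k _ I _ _ hI
  exact lie_rootSp k hrp' hqr hqp ▸ LieSubmodule.lie_mem_lie hprI hrqI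

theorem apply_eq_zero_of_mem_radical_lieO_sp (hn : 3 ≤ Fintype.card ι) {X : lieO k Π₂ₙ}
    (hX : X ∈ radical k (lieO k Π₂ₙ)) {a b : ι ⊕ ι} (hba : b ≠ a) (hba' : b ≠ a.swap) :
    (X : Matrix (ι ⊕ ι) (ι ⊕ ι) k) a b = 0 := by
  by_contra hx
  have h1 : b.swap ≠ a.swap := fun h => hba (Sum.swap_leftInverse.injective h)
  have h2 : b.swap ≠ a.swap.swap := by rwa [Sum.swap_swap, Ne, Sum.swap_eq_iff_eq_swap]
  refine rootSp_notMem_radical hn h1 h2 (LieSubmodule.mem_of_smul_mem hx ?_)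
  have hsym : (X : Matrix (ι ⊕ ι) (ι ⊕ ι) k) b.swap a.swap =
      (X : Matrix (ι ⊕ ι) (ι ⊕ ι) k) a b := by
    simpa using mem_lieO_sp_iff.1 X.2 b a.swap
  have key : (X : Matrix (ι ⊕ ι) (ι ⊕ ι) k) a b • rootSp k a.swap b.swap =
      ⁅longRootSp k a.swap, ⁅longRootSp k b, X⁆⁆ := by
    ext1
    simp only [rootSp, longRootSp, SetLike.val_smul, LieSubalgebra.coe_bracket, Sum.swap_swap,
      lie_single_swap_lie_single_swap hba.symm, hsym, neg_eq_self_of_charTwo, smul_add,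
      smul_single, smul_eq_mul, mul_one]
  rw [key]
  exact lie_mem_right k _ _ _ _ (lie_mem_right k _ _ _ _ hX)

theorem exists_eq_smul_one_of_mem_radical_lieO_sp (hn : 3 ≤ Fintype.card ι) {X : lieO k Π₂ₙ}
    (hX : X ∈ radical k (lieO k Π₂ₙ)) : ∃ c : k, (X : Matrix (ι ⊕ ι) (ι ⊕ ι) k) = c • 1 := by
  have hoff {Y : lieO k Π₂ₙ} (hY : Y ∈ radical k (lieO k Π₂ₙ)) {a b : ι ⊕ ι} (hba : b ≠ a)
      (hba' : b ≠ a.swap) : (Y : Matrix (ι ⊕ ι) (ι ⊕ ι) k) a b = 0 :=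
    apply_eq_zero_of_mem_radical_lieO_sp hn hY hba hba'
  have hmem (r a : ι ⊕ ι) : ⁅rootSp k r a, X⁆ ∈ radical k (lieO k Π₂ₙ) :=
    lie_mem_right k _ _ _ _ hX
  have hdiag {a r : ι ⊕ ι} (hra : r ≠ a) (hra' : r ≠ a.swap) :
      (X : Matrix (ι ⊕ ι) (ι ⊕ ι) k) a a = (X : Matrix (ι ⊕ ι) (ι ⊕ ι) k) r r := by
    have := hoff (hmem r a) hra.symm (fun h => hra' (by rw [h, Sum.swap_swap]))
    rwa [LieSubalgebra.coe_bracket, lie_rootSp_apply hra', sub_eq_zero] at this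
  have hlong (a : ι ⊕ ι) : (X : Matrix (ι ⊕ ι) (ι ⊕ ι) k) a a.swap = 0 := by
    obtain ⟨r, hra, hra', -, -⟩ := exists_ne_swap_ne_swap hn a a
    have := hoff (hmem r a) (fun h => hra' h.symm)
      (fun h => hra (Sum.swap_leftInverse.injective h).symm)
    rwa [LieSubalgebra.coe_bracket, lie_rootSp_apply_swap hra hra'] at this
  have hX_diag : (X : Matrix (ι ⊕ ι) (ι ⊕ ι) k).IsDiag := fun a b hab => by
    by_cases hb : b = a.swap
    · exact hb ▸ hlong a
    · exact hoff hX (Ne.symm hab) hb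
  obtain ⟨i⟩ : Nonempty (ι ⊕ ι) := Fintype.card_pos_iff.1 (by rw [Fintype.card_sum]; omega)
  refine ⟨_, hX_diag.eq_smul_one (fun a b => ?_) i⟩
  obtain ⟨r, hra, hra', hrb, hrb'⟩ := exists_ne_swap_ne_swap hn a b
  rw [hdiag hra hra', hdiag hrb hrb']

end Symplectic

/-- Let `char k = 2` and `n ≥ 3`.  (a) For every invertible diagonal
`n × n` matrix `D`, the radical of `o(D)` equals the centre of `o(D)`, and both equal the
line `k • 1ₙ`.  (b) The radical of `sp₂ₙ = o(Π₂ₙ)` equals the centre of `sp₂ₙ`, and both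
equal the line `k • 1₂ₙ`. -/
theorem radical_eq_center_lieO_of_charTwo (k : Type) [Field k] [CharP k 2]
    (n : ℕ) (hn : 3 ≤ n) :
    (∀ D : Fin n → k, (∀ i, D i ≠ 0) →
      LieAlgebra.radical k ↥(lieO k (Matrix.diagonal D)) =
        LieAlgebra.center k ↥(lieO k (Matrix.diagonal D)) ∧
      (∀ X : ↥(lieO k (Matrix.diagonal D)),
        X ∈ LieAlgebra.radical k ↥(lieO k (Matrix.diagonal D)) ↔
          ∃ c : k, (X : Matrix (Fin n) (Fin n) k) = c • (1 : Matrix (Fin n) (Fin n) k))) ∧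
    (LieAlgebra.radical k ↥(lieO k
        (Matrix.fromBlocks 0 1 (-1) 0 : Matrix (Fin n ⊕ Fin n) (Fin n ⊕ Fin n) k)) =
      LieAlgebra.center k ↥(lieO k
        (Matrix.fromBlocks 0 1 (-1) 0 : Matrix (Fin n ⊕ Fin n) (Fin n ⊕ Fin n) k)) ∧
    (∀ X : ↥(lieO k
        (Matrix.fromBlocks 0 1 (-1) 0 : Matrix (Fin n ⊕ Fin n) (Fin n ⊕ Fin n) k)),
      X ∈ LieAlgebra.radical k ↥(lieO k
          (Matrix.fromBlocks 0 1 (-1) 0 : Matrix (Fin n ⊕ Fin n) (Fin n ⊕ Fin n) k)) ↔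
        ∃ c : k, (X : Matrix (Fin n ⊕ Fin n) (Fin n ⊕ Fin n) k) =
          c • (1 : Matrix (Fin n ⊕ Fin n) (Fin n ⊕ Fin n) k))) := by
  rw [← Fintype.card_fin n] at hn
  exact ⟨fun D hD => LieSubalgebra.radical_eq_center_of_le_scalars _ fun _ hX =>
      exists_eq_smul_one_of_mem_radical_lieO_diagonal hD hn hX,
    LieSubalgebra.radical_eq_center_of_le_scalars _ fun _ hX =>
      exists_eq_smul_one_of_mem_radical_lieO_sp hn hX⟩
end
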